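/- Let d ≥ 2 and λ_1,…,λ_d > 0. If max_{1≤k≤d} sqrt( (Σ_{i≠k} λ_i)(Σ_{i≠k} 1/λ_i) ) < d + 1, then the identity matrix I_d satisfies Condition (C). In particular if all λ_i are equal then Condition (C) holds. -/

import Mathlib

open Matrix Finset

/-- The matrix `Γ^{(k)}`. -/
noncomputable def GammaK {d : ℕ} (lam : Fin d → ℝ) (Γ : Matrix (Fin d) (Fin d) ℝ)
    (k : Fin d) : Matrix (Fin d) (Fin d) ℝ :=
  Matrix.of fun i j => (lam i + lam j) / 2 * (Γ i j + Γ k k - Γ i k - Γ j k)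

/-- Condition (C). -/
def CondC {d : ℕ} (lam : Fin d → ℝ) (Γ : Matrix (Fin d) (Fin d) ℝ) : Prop :=
  Γ.PosDef ∧ ∀ k : Fin d, ∀ x : Fin d → ℝ, x k = 0 → x ≠ 0 →
    0 < x ⬝ᵥ (GammaK lam Γ k).mulVec x

private lemma key {d : ℕ} (hd : 2 ≤ d) (lam : Fin d → ℝ) (hlam : ∀ i, 0 < lam i) (k : Fin d)
    (h : Real.sqrt ((∑ i ∈ Finset.univ.erase k, lam i) *
          (∑ i ∈ Finset.univ.erase k, (lam i)⁻¹)) < (d : ℝ) + 1)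
    (x : Fin d → ℝ) (hxk : x k = 0) (hx : x ≠ 0) :
    0 < x ⬝ᵥ (GammaK lam (1 : Matrix (Fin d) (Fin d) ℝ) k).mulVec x := by
  classical
  set s : Finset (Fin d) := Finset.univ.erase k with hs
  set S : ℝ := ∑ i ∈ s, lam i with hS
  set T : ℝ := ∑ i ∈ s, (lam i)⁻¹ with hT
  set E : ℝ := ∑ i ∈ s, lam i * x i ^ 2 with hE
  set P : ℝ := ∑ i ∈ s, lam i * x i with hP
  set R : ℝ := ∑ i ∈ s, x i with hR
  have hsne : s.Nonempty := by
    apply Finset.card_pos.mp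
    rw [hs, Finset.card_erase_of_mem (Finset.mem_univ k)]
    simp
    omega
  -- Step 1 : the quadratic form
  have hQ : x ⬝ᵥ (GammaK lam (1 : Matrix (Fin d) (Fin d) ℝ) k).mulVec x = E + P * R := by
    have hrow : ∀ i ∈ s, (∑ j, GammaK lam (1 : Matrix (Fin d) (Fin d) ℝ) k i j * x j)
        = ∑ j ∈ s, ((lam i + lam j) / 2 * ((if i = j then (1:ℝ) else 0) + 1)) * x j := by
      intro i hi
      have hik : i ≠ k := Finset.ne_of_mem_erase hi
      rw [← Finset.sum_erase_add Finset.univ _ (Finset.mem_univ k)]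
      simp only [hxk, mul_zero, add_zero]
      refine Finset.sum_congr rfl fun j hj => ?_
      have hjk : j ≠ k := Finset.ne_of_mem_erase hj
      simp [GammaK, Matrix.one_apply, hik, hjk]
    have h1 : x ⬝ᵥ (GammaK lam (1 : Matrix (Fin d) (Fin d) ℝ) k).mulVec x
        = ∑ i ∈ s, ∑ j ∈ s, x i * (((lam i + lam j) / 2 * ((if i = j then (1:ℝ) else 0) + 1)) * x j) := by
      rw [dotProduct, ← Finset.sum_erase_add Finset.univ _ (Finset.mem_univ k)]
      simp only [hxk, zero_mul, add_zero]
      refine Finset.sum_congr rfl fun i hi => ?_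
      rw [Matrix.mulVec, dotProduct, hrow i hi, Finset.mul_sum]
    rw [h1]
    have h2 : ∀ i ∈ s, ∀ j ∈ s,
        x i * (((lam i + lam j) / 2 * ((if i = j then (1:ℝ) else 0) + 1)) * x j)
        = (if i = j then lam i * x i ^ 2 else 0) + ((lam i * x i) * x j / 2 + x i * (lam j * x j) / 2) := by
      intro i _ j _
      by_cases hij : i = j
      · subst hij; simp; ring
      · simp [hij]; ring
    calc ∑ i ∈ s, ∑ j ∈ s, x i * (((lam i + lam j) / 2 * ((if i = j then (1:ℝ) else 0) + 1)) * x j)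
        = ∑ i ∈ s, ∑ j ∈ s, ((if i = j then lam i * x i ^ 2 else 0)
            + ((lam i * x i) * x j / 2 + x i * (lam j * x j) / 2)) := by
          exact Finset.sum_congr rfl fun i hi => Finset.sum_congr rfl fun j hj => h2 i hi j hj
      _ = ∑ i ∈ s, ((if i ∈ s then lam i * x i ^ 2 else 0)
            + ((lam i * x i) * R / 2 + x i * P / 2)) := by
          refine Finset.sum_congr rfl fun i hi => ?_
          rw [Finset.sum_add_distrib, Finset.sum_ite_eq s i (fun _ => lam i * x i ^ 2),
            Finset.sum_add_distrib, ← Finset.sum_div, ← Finset.sum_div,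
            ← Finset.mul_sum, ← Finset.mul_sum, ← hR, ← hP]
      _ = E + P * R := by
          rw [Finset.sum_add_distrib, Finset.sum_add_distrib, ← Finset.sum_div, ← Finset.sum_div,
            ← Finset.sum_mul, ← Finset.sum_mul, ← hP, ← hR]
          have : ∑ i ∈ s, (if i ∈ s then lam i * x i ^ 2 else 0) = E := by
            rw [hE]; exact Finset.sum_congr rfl fun i hi => by simp [hi]
          rw [this]; ring
  -- positivity facts
  have hS0 : 0 < S := Finset.sum_pos (fun i _ => hlam i) hsne
  have hT0 : 0 < T := Finset.sum_pos (fun i _ => inv_pos.mpr (hlam i)) hsne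
  have hE0 : 0 < E := by
    obtain ⟨i, hi⟩ := Function.ne_iff.mp hx
    have hik : i ≠ k := by intro hik; exact hi (by simpa [hik] using hxk)
    refine Finset.sum_pos' (fun j _ => mul_nonneg (hlam j).le (sq_nonneg _))
      ⟨i, by simp [hs, hik], mul_pos (hlam i) (pow_two_pos_of_ne_zero hi)⟩
  set a : ℝ := Real.sqrt S with ha
  set b : ℝ := Real.sqrt T with hb
  have ha0 : 0 < a := Real.sqrt_pos.mpr hS0
  have hb0 : 0 < b := Real.sqrt_pos.mpr hT0
  have ha2 : a ^ 2 = S := Real.sq_sqrt hS0.le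
  have hb2 : b ^ 2 = T := Real.sq_sqrt hT0.le
  set n : ℝ := (s.card : ℝ) with hn
  -- Cauchy-Schwarz
  have hCS := Finset.sum_mul_sq_le_sq_mul_sq s
    (fun i => (b * lam i - a) / Real.sqrt (lam i)) (fun i => Real.sqrt (lam i) * x i)
  have hfg : ∑ i ∈ s, ((b * lam i - a) / Real.sqrt (lam i)) * (Real.sqrt (lam i) * x i)
      = b * P - a * R := by
    have : ∀ i ∈ s, ((b * lam i - a) / Real.sqrt (lam i)) * (Real.sqrt (lam i) * x i)
        = b * (lam i * x i) - a * x i := by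
      intro i _
      have hl : Real.sqrt (lam i) ≠ 0 := Real.sqrt_ne_zero'.mpr (hlam i)
      field_simp
    rw [Finset.sum_congr rfl this, Finset.sum_sub_distrib, ← Finset.mul_sum, ← Finset.mul_sum,
      ← hP, ← hR]
  have hf2 : ∑ i ∈ s, ((b * lam i - a) / Real.sqrt (lam i)) ^ 2
      = 2 * (S * T) - 2 * (a * b) * n := by
    have : ∀ i ∈ s, ((b * lam i - a) / Real.sqrt (lam i)) ^ 2
        = b ^ 2 * lam i - 2 * (a * b) + a ^ 2 * (lam i)⁻¹ := by
      intro i _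
      have hl : 0 < lam i := hlam i
      have hsq : Real.sqrt (lam i) ^ 2 = lam i := Real.sq_sqrt hl.le
      rw [div_pow, hsq]
      field_simp
      ring
    rw [Finset.sum_congr rfl this, Finset.sum_add_distrib, Finset.sum_sub_distrib,
      ← Finset.mul_sum, ← Finset.mul_sum, ← Finset.mul_sum, Finset.sum_const, nsmul_eq_mul,
      ha2, hb2]
    rw [← Finset.mul_sum, ← hS, ← hT]
    ring
  have hg2 : ∑ i ∈ s, (Real.sqrt (lam i) * x i) ^ 2 = E := by
    rw [hE]
    refine Finset.sum_congr rfl fun i _ => ?_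
    rw [mul_pow, Real.sq_sqrt (hlam i).le]
  rw [hfg, hf2, hg2] at hCS
  -- the hypothesis gives a*b < d + 1
  have hab : a * b < (d : ℝ) + 1 := by
    have : Real.sqrt (S * T) = a * b := Real.sqrt_mul hS0.le T
    rw [← this]
    exact h
  have hnd : n + 2 = (d : ℝ) + 1 := by
    have hcard : s.card = d - 1 := by
      rw [hs, Finset.card_erase_of_mem (Finset.mem_univ k)]
      simp
    rw [hn, hcard]
    have : (1:ℕ) ≤ d := by omega
    push_cast [Nat.cast_sub this]
    ring
  have hab' : a * b < n + 2 := by rw [hnd]; exact hab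
  have hST : S * T = (a * b) ^ 2 := by rw [mul_pow, ha2, hb2]
  rw [hQ]
  -- final nonlinear arithmetic
  nlinarith [sq_nonneg (b * P + a * R), mul_pos ha0 hb0,
    mul_pos (mul_pos (mul_pos ha0 hb0) (by linarith : (0:ℝ) < n + 2 - a * b)) hE0]

theorem stmt5 {d : ℕ} (hd : 2 ≤ d) (lam : Fin d → ℝ) (hlam : ∀ i, 0 < lam i) :
    ((∀ k : Fin d,
        Real.sqrt ((∑ i ∈ Finset.univ.erase k, lam i) *
          (∑ i ∈ Finset.univ.erase k, (lam i)⁻¹)) < (d : ℝ) + 1) →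
      CondC lam (1 : Matrix (Fin d) (Fin d) ℝ)) ∧
    ((∀ i j : Fin d, lam i = lam j) → CondC lam (1 : Matrix (Fin d) (Fin d) ℝ)) := by
  constructor
  · intro h
    exact ⟨Matrix.PosDef.one, fun k x hxk hx => key hd lam hlam k (h k) x hxk hx⟩
  · intro heq
    refine ⟨Matrix.PosDef.one, fun k x hxk hx => key hd lam hlam k ?_ x hxk hx⟩
    have hL : ∀ i ∈ Finset.univ.erase k, lam i = lam k := fun i _ => heq i k
    have hL' : ∀ i ∈ Finset.univ.erase k, (lam i)⁻¹ = (lam k)⁻¹ := fun i _ => by rw [heq i k]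
    have hcard : (Finset.univ.erase k).card = d - 1 := by
      rw [Finset.card_erase_of_mem (Finset.mem_univ k)]; simp
    rw [Finset.sum_congr rfl hL, Finset.sum_congr rfl hL', Finset.sum_const, Finset.sum_const,
      hcard, nsmul_eq_mul, nsmul_eq_mul]
    have hlk := hlam k
    have h1 : ((d - 1 : ℕ) : ℝ) * lam k * (((d - 1 : ℕ) : ℝ) * (lam k)⁻¹)
        = (((d - 1 : ℕ) : ℝ)) ^ 2 := by
      field_simp
    rw [h1, Real.sqrt_sq (by positivity)]
    have : ((d - 1 : ℕ) : ℝ) = (d : ℝ) - 1 := by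
      push_cast [Nat.cast_sub (by omega : (1:ℕ) ≤ d)]; ring
    rw [this]
    linarith
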